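/- For any density matrices σ₀, σ₁ on ℂ² and any binary POVM (Q₀, Q₁), there exists a binary projective measurement (P₀, P₁) such that for every prior p ∈ [0,1], the binary mutual information satisfies I(p; Re(trace(P₁*σ₁)), Re(trace(P₀*σ₀))) ≥ I(p; Re(trace(Q₁*σ₁)), Re(trace(Q₀*σ₀))). Hence the optimal measurements for the classical binary capacity are always associated to a pair of orthogonal projectors. (Corollary to Proposition 1) -/

import Mathlib

open Matrix
open scoped ComplexOrder

private lemma xlogxx (x : ℝ) : x * Real.log (x / x) = 0 := by
  rcases eq_or_ne x 0 with h | h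
  · simp [h]
  · simp [div_self h]

private lemma logsum {a₁ a₂ b₁ b₂ : ℝ} (ha₁ : 0 ≤ a₁) (ha₂ : 0 ≤ a₂)
    (hb₁ : 0 ≤ b₁) (hb₂ : 0 ≤ b₂) (h₁ : b₁ = 0 → a₁ = 0) (h₂ : b₂ = 0 → a₂ = 0) :
    (a₁ + a₂) * Real.log ((a₁ + a₂) / (b₁ + b₂)) ≤
      a₁ * Real.log (a₁ / b₁) + a₂ * Real.log (a₂ / b₂) := by
  rcases eq_or_lt_of_le hb₁ with h | hb₁pos
  · rw [h₁ h.symm]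
    simp [← h]
  rcases eq_or_lt_of_le hb₂ with h | hb₂pos
  · rw [h₂ h.symm]
    simp [← h]
  have hbb : (0:ℝ) < b₁ + b₂ := by linarith
  have hmem₁ : a₁ / b₁ ∈ Set.Ici (0:ℝ) := Set.mem_Ici.2 (div_nonneg ha₁ hb₁)
  have hmem₂ : a₂ / b₂ ∈ Set.Ici (0:ℝ) := Set.mem_Ici.2 (div_nonneg ha₂ hb₂)
  have key := Real.convexOn_mul_log.2 hmem₁ hmem₂
    (div_nonneg hb₁pos.le hbb.le) (div_nonneg hb₂pos.le hbb.le)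
    (by field_simp)
  simp only [smul_eq_mul] at key
  have harg : b₁ / (b₁ + b₂) * (a₁ / b₁) + b₂ / (b₁ + b₂) * (a₂ / b₂)
      = (a₁ + a₂) / (b₁ + b₂) := by field_simp
  rw [harg] at key
  have := mul_le_mul_of_nonneg_left key hbb.le
  calc (a₁ + a₂) * Real.log ((a₁ + a₂) / (b₁ + b₂))
      = (b₁ + b₂) * ((a₁ + a₂) / (b₁ + b₂) * Real.log ((a₁ + a₂) / (b₁ + b₂))) := by
        field_simp
    _ ≤ (b₁ + b₂) * (b₁ / (b₁ + b₂) * (a₁ / b₁ * Real.log (a₁ / b₁))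
          + b₂ / (b₁ + b₂) * (a₂ / b₂ * Real.log (a₂ / b₂))) := this
    _ = a₁ * Real.log (a₁ / b₁) + a₂ * Real.log (a₂ / b₂) := by
        field_simp

noncomputable def klB (u v : ℝ) : ℝ :=
  u * Real.log (u / v) + (1 - u) * Real.log ((1 - u) / (1 - v))

lemma klB_nonneg {u v : ℝ} (hu0 : 0 ≤ u) (hu1 : u ≤ 1) (hv0 : 0 ≤ v) (hv1 : v ≤ 1)
    (h0 : v = 0 → u = 0) (h1 : v = 1 → u = 1) : 0 ≤ klB u v := by
  have := logsum (a₁ := u) (a₂ := 1 - u) (b₁ := v) (b₂ := 1 - v)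
    hu0 (by linarith) hv0 (by linarith) h0
    (fun h => by have : v = 1 := by linarith
                 rw [h1 this]; ring)
  simpa [klB] using this

lemma klB_mix {μ a u v : ℝ} (hμ0 : 0 ≤ μ) (hμ1 : μ ≤ 1) (ha0 : 0 ≤ a) (ha1 : a ≤ 1)
    (hu0 : 0 ≤ u) (hu1 : u ≤ 1) (hv0 : 0 ≤ v) (hv1 : v ≤ 1)
    (h0 : v = 0 → u = 0) (h1 : v = 1 → u = 1) :
    klB (μ * u + (1 - μ) * a) (μ * v + (1 - μ) * a) ≤ μ * klB u v := by
  rcases eq_or_lt_of_le hμ0 with hμ | hμpos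
  · rw [← hμ]
    simp only [zero_mul, sub_zero, one_mul, zero_add]
    simp [klB, xlogxx]
  have hμne : μ ≠ 0 := ne_of_gt hμpos
  have T1 := logsum (a₁ := μ * u) (a₂ := (1 - μ) * a) (b₁ := μ * v) (b₂ := (1 - μ) * a)
    (mul_nonneg (by linarith) (by linarith)) (mul_nonneg (by linarith) (by linarith))
    (mul_nonneg (by linarith) (by linarith)) (mul_nonneg (by linarith) (by linarith))
    (fun h => by
      have hv : v = 0 := by
        rcases mul_eq_zero.1 h with h' | h'
        · exact absurd h' hμne
        · exact h'
      rw [h0 hv, mul_zero])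
    (fun h => h)
  have T2 := logsum (a₁ := μ * (1 - u)) (a₂ := (1 - μ) * (1 - a)) (b₁ := μ * (1 - v))
    (b₂ := (1 - μ) * (1 - a))
    (mul_nonneg (by linarith) (by linarith)) (mul_nonneg (by linarith) (by linarith))
    (mul_nonneg (by linarith) (by linarith)) (mul_nonneg (by linarith) (by linarith))
    (fun h => by
      have hv : v = 1 := by
        rcases mul_eq_zero.1 h with h' | h'
        · exact absurd h' hμne
        · linarith
      rw [h1 hv]; ring)
    (fun h => h)
  rw [mul_div_mul_left u v hμne] at T1
  rw [mul_div_mul_left (1 - u) (1 - v) hμne] at T2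
  rw [xlogxx ((1 - μ) * a)] at T1
  rw [xlogxx ((1 - μ) * (1 - a))] at T2
  have e1 : (1:ℝ) - (μ * u + (1 - μ) * a) = μ * (1 - u) + (1 - μ) * (1 - a) := by ring
  have e2 : (1:ℝ) - (μ * v + (1 - μ) * a) = μ * (1 - v) + (1 - μ) * (1 - a) := by ring
  unfold klB
  rw [e1, e2]
  calc (μ * u + (1 - μ) * a) * Real.log ((μ * u + (1 - μ) * a) / (μ * v + (1 - μ) * a))
        + (μ * (1 - u) + (1 - μ) * (1 - a)) *
          Real.log ((μ * (1 - u) + (1 - μ) * (1 - a)) / (μ * (1 - v) + (1 - μ) * (1 - a)))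
      ≤ (μ * u * Real.log (u / v) + 0) + (μ * (1 - u) * Real.log ((1 - u) / (1 - v)) + 0) := by
        exact add_le_add T1 T2
    _ = μ * (u * Real.log (u / v) + (1 - u) * Real.log ((1 - u) / (1 - v))) := by ring

lemma mul_log_div_expand {x z : ℝ} (hx : 0 ≤ x) (hz : x = 0 ∨ 0 < z) :
    x * Real.log (x / z) = x * Real.log x - x * Real.log z := by
  rcases eq_or_lt_of_le hx with h | hxpos
  · simp [← h]
  · rcases hz with h | h
    · exact absurd h hxpos.ne'
    · rw [Real.log_div hxpos.ne' h.ne', mul_sub]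

/-- A binary projective measurement on ℂ²: a pair of Hermitian idempotent matrices
summing to the identity. -/
def IsProjMeas (P₀ P₁ : Matrix (Fin 2) (Fin 2) ℂ) : Prop :=
  P₀.IsHermitian ∧ P₁.IsHermitian ∧ P₀ * P₀ = P₀ ∧ P₁ * P₁ = P₁ ∧ P₀ + P₁ = 1

/-- Mutual information of a binary channel with prior `p` (probability of input 1)
and correct transition probabilities `p11 = p_{1|1}`, `p00 = p_{0|0}`. -/
noncomputable def mutInfo (p p11 p00 : ℝ) : ℝ :=
  Real.binEntropy (p00 * (1 - p) + (1 - p11) * p)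
    - (1 - p) * Real.binEntropy p00 - p * Real.binEntropy p11

lemma mutInfo_eq_klB {p c1 c0 : ℝ} (hp0 : 0 < p) (hp1 : p < 1)
    (hc10 : 0 ≤ c1) (hc11 : c1 ≤ 1) (hc00 : 0 ≤ c0) (hc01 : c0 ≤ 1) :
    mutInfo p c1 c0 =
      (1 - p) * klB c0 (c0 * (1 - p) + (1 - c1) * p)
        + p * klB (1 - c1) (c0 * (1 - p) + (1 - c1) * p) := by
  set y : ℝ := c0 * (1 - p) + (1 - c1) * p with hy
  have hyc0 : c0 = 0 ∨ 0 < y := by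
    rcases eq_or_lt_of_le hc00 with h | h
    · exact Or.inl h.symm
    · right; nlinarith
  have hyc1 : 1 - c1 = 0 ∨ 0 < y := by
    rcases eq_or_lt_of_le hc11 with h | h
    · exact Or.inl (by linarith)
    · right; nlinarith
  have hyc0' : 1 - c0 = 0 ∨ 0 < 1 - y := by
    rcases eq_or_lt_of_le hc01 with h | h
    · exact Or.inl (by linarith)
    · right; nlinarith
  have hyc1' : c1 = 0 ∨ 0 < 1 - y := by
    rcases eq_or_lt_of_le hc10 with h | h
    · exact Or.inl h.symm
    · right; nlinarith
  have hy0 : y = 0 ∨ 0 < y := by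
    rcases hyc0 with h | h
    · rcases hyc1 with h' | h'
      · left; rw [hy, h, h']; ring
      · exact Or.inr h'
    · exact Or.inr h
  have hy1 : 1 - y = 0 ∨ 0 < 1 - y := by
    rcases hyc0' with h | h
    · rcases hyc1' with h' | h'
      · left; rw [hy, h']; nlinarith
      · exact Or.inr h'
    · exact Or.inr h
  have e1 := mul_log_div_expand hc00 hyc0
  have e2 := mul_log_div_expand (x := 1 - c1) (z := y) (by linarith) hyc1
  have e3 := mul_log_div_expand (x := 1 - c0) (z := 1 - y) (by linarith) hyc0'
  have e4 := mul_log_div_expand (x := c1) (z := 1 - y) hc10 hyc1'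
  have hylog : y * Real.log y = c0 * (1 - p) * Real.log y + (1 - c1) * p * Real.log y := by
    rw [hy]; ring
  simp only [mutInfo, klB, Real.binEntropy, Real.log_inv, ← hy]
  rw [show (1:ℝ) - (1 - c1) = c1 by ring, e1, e2, e3, e4]
  linear_combination (Real.log (1 - y) - Real.log y) * hy

lemma mutInfo_mix_le {p μ a c1 c0 : ℝ}
    (hp0 : 0 ≤ p) (hp1 : p ≤ 1) (hμ0 : 0 ≤ μ) (hμ1 : μ ≤ 1) (ha0 : 0 ≤ a) (ha1 : a ≤ 1)
    (hc10 : 0 ≤ c1) (hc11 : c1 ≤ 1) (hc00 : 0 ≤ c0) (hc01 : c0 ≤ 1) :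
    mutInfo p (μ * c1 + (1 - μ) * (1 - a)) (μ * c0 + (1 - μ) * a) ≤ mutInfo p c1 c0 := by
  rcases eq_or_lt_of_le hp0 with h | hp0'
  · have h1 : mutInfo 0 c1 c0 = 0 := by simp [mutInfo]
    have h2 : mutInfo 0 (μ * c1 + (1 - μ) * (1 - a)) (μ * c0 + (1 - μ) * a) = 0 := by
      simp [mutInfo]
    rw [← h]; rw [h1, h2]
  rcases eq_or_lt_of_le hp1 with h | hp1'
  · have h1 : mutInfo 1 c1 c0 = 0 := by
      simp [mutInfo, Real.binEntropy_one_sub]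
    have h2 : mutInfo 1 (μ * c1 + (1 - μ) * (1 - a)) (μ * c0 + (1 - μ) * a) = 0 := by
      simp [mutInfo, Real.binEntropy_one_sub]
    rw [h]; rw [h1, h2]
  -- now 0 < p < 1
  set yC : ℝ := c0 * (1 - p) + (1 - c1) * p with hyC
  have hq00 : 0 ≤ μ * c0 + (1 - μ) * a := by nlinarith
  have hq01 : μ * c0 + (1 - μ) * a ≤ 1 := by nlinarith
  have hq10 : 0 ≤ μ * c1 + (1 - μ) * (1 - a) := by nlinarith
  have hq11 : μ * c1 + (1 - μ) * (1 - a) ≤ 1 := by nlinarith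
  have hyC0 : 0 ≤ yC := by rw [hyC]; nlinarith
  have hyC1 : yC ≤ 1 := by rw [hyC]; nlinarith
  have hside0 : yC = 0 → c0 = 0 := by intro h; rw [hyC] at h; nlinarith
  have hside1 : yC = 1 → c0 = 1 := by intro h; rw [hyC] at h; nlinarith
  have hside0' : yC = 0 → 1 - c1 = 0 := by intro h; rw [hyC] at h; nlinarith
  have hside1' : yC = 1 → 1 - c1 = 1 := by intro h; rw [hyC] at h; nlinarith
  rw [mutInfo_eq_klB hp0' hp1' hc10 hc11 hc00 hc01,
      mutInfo_eq_klB hp0' hp1' hq10 hq11 hq00 hq01, ← hyC]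
  have hyQ : (μ * c0 + (1 - μ) * a) * (1 - p) + (1 - (μ * c1 + (1 - μ) * (1 - a))) * p
      = μ * yC + (1 - μ) * a := by rw [hyC]; ring
  rw [hyQ]
  have K0 : klB (μ * c0 + (1 - μ) * a) (μ * yC + (1 - μ) * a) ≤ μ * klB c0 yC :=
    klB_mix hμ0 hμ1 ha0 ha1 hc00 hc01 hyC0 hyC1 hside0 hside1
  have K1 : klB (1 - (μ * c1 + (1 - μ) * (1 - a))) (μ * yC + (1 - μ) * a) ≤
      μ * klB (1 - c1) yC := by
    rw [show (1:ℝ) - (μ * c1 + (1 - μ) * (1 - a)) = μ * (1 - c1) + (1 - μ) * a by ring]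
    exact klB_mix hμ0 hμ1 ha0 ha1 (by linarith) (by linarith) hyC0 hyC1 hside0' hside1'
  have N0 : 0 ≤ klB c0 yC := klB_nonneg hc00 hc01 hyC0 hyC1 hside0 hside1
  have N1 : 0 ≤ klB (1 - c1) yC :=
    klB_nonneg (by linarith) (by linarith) hyC0 hyC1 hside0' hside1'
  calc (1 - p) * klB (μ * c0 + (1 - μ) * a) (μ * yC + (1 - μ) * a)
        + p * klB (1 - (μ * c1 + (1 - μ) * (1 - a))) (μ * yC + (1 - μ) * a)
      ≤ (1 - p) * (μ * klB c0 yC) + p * (μ * klB (1 - c1) yC) :=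
        add_le_add (mul_le_mul_of_nonneg_left K0 (by linarith))
          (mul_le_mul_of_nonneg_left K1 hp0'.le)
    _ ≤ (1 - p) * klB c0 yC + p * klB (1 - c1) yC := by
        nlinarith [mul_nonneg (mul_nonneg (sub_nonneg.2 hμ1) (by linarith : (0:ℝ) ≤ 1 - p)) N0,
          mul_nonneg (mul_nonneg (sub_nonneg.2 hμ1) hp0'.le) N1]

lemma mutInfo_eig_le {p p11 p00 lmin lmax : ℝ}
    (hp0 : 0 ≤ p) (hp1 : p ≤ 1)
    (h110 : 0 ≤ p11) (h111 : p11 ≤ 1) (h000 : 0 ≤ p00) (h001 : p00 ≤ 1)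
    (hl0 : 0 ≤ lmin) (hlm : lmin ≤ lmax) (hl1 : lmax ≤ 1) :
    mutInfo p (1 - (lmax * (1 - p11) + lmin * p11)) (lmax * p00 + lmin * (1 - p00)) ≤
      mutInfo p p11 p00 := by
  set μ : ℝ := lmax - lmin with hμ
  rcases eq_or_lt_of_le (show μ ≤ 1 by rw [hμ]; linarith) with hμ1 | hμ1
  · have hmax : lmax = 1 := by linarith [hμ1, hl0, hl1]
    have hmin : lmin = 0 := by rw [hμ] at hμ1; linarith
    rw [hmax, hmin]
    have e1 : (1:ℝ) - (1 * (1 - p11) + 0 * p11) = p11 := by ring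
    have e2 : (1:ℝ) * p00 + 0 * (1 - p00) = p00 := by ring
    rw [e1, e2]
  · set a : ℝ := lmin / (1 - μ) with ha
    have h1μ : (0:ℝ) < 1 - μ := by linarith
    have ha0 : 0 ≤ a := div_nonneg hl0 h1μ.le
    have ha1 : a ≤ 1 := by
      rw [ha, div_le_one h1μ]; rw [hμ]; linarith
    have e1 : (1:ℝ) - (lmax * (1 - p11) + lmin * p11) = μ * p11 + (1 - μ) * (1 - a) := by
      have hdiv : (1 - μ) * a = lmin := by rw [ha]; field_simp
      rw [hμ] at hdiv ⊢; linear_combination hdiv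
    have e2 : lmax * p00 + lmin * (1 - p00) = μ * p00 + (1 - μ) * a := by
      have hdiv : (1 - μ) * a = lmin := by rw [ha]; field_simp
      rw [hμ] at hdiv ⊢; linear_combination -1 * hdiv
    rw [e1, e2]
    exact mutInfo_mix_le hp0 hp1 (by rw [hμ]; linarith) hμ1.le ha0 ha1 h110 h111 h000 h001

lemma trace_mul_re_nonneg {n : Type*} [Fintype n] [DecidableEq n] {A B : Matrix n n ℂ}
    (hA : A.PosSemidef) (hB : B.PosSemidef) : 0 ≤ ((A * B).trace).re := by
  obtain ⟨C, hC⟩ : ∃ C : Matrix n n ℂ, B = Cᴴ * C := by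
    open scoped MatrixOrder Matrix.Norms.L2Operator in
    exact CStarAlgebra.nonneg_iff_eq_star_mul_self.mp hB.nonneg
  have h2 : (C * A * Cᴴ).PosSemidef := hA.mul_mul_conjTranspose_same C
  have h1 : (A * B).trace = (C * A * Cᴴ).trace := by
    rw [hC, ← Matrix.mul_assoc, Matrix.trace_mul_cycle]
  have h3 : ∀ i, 0 ≤ (C * A * Cᴴ) i i := fun i => h2.diag_nonneg
  have h4 : 0 ≤ (C * A * Cᴴ).trace := Finset.sum_nonneg fun i _ => h3 i
  rw [h1]
  simpa using (Complex.le_def.mp h4).1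

/-- **Corollary to Proposition 1.** For any output states and any binary POVM, there is a
binary projective measurement whose induced binary channel has mutual information at
least as large, for every prior. Hence the optimal measurements for the classical binary
capacity are always associated to a pair of orthogonal projectors. -/
theorem exists_projective_better_mutual_information
    (σ₀ σ₁ Q₀ Q₁ : Matrix (Fin 2) (Fin 2) ℂ)
    (hσ₀ : σ₀.PosSemidef) (hσ₀t : σ₀.trace = 1)
    (hσ₁ : σ₁.PosSemidef) (hσ₁t : σ₁.trace = 1)
    (hQ₀ : Q₀.PosSemidef) (hQ₁ : Q₁.PosSemidef) (hQ : Q₀ + Q₁ = 1) :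
    ∃ P₀ P₁ : Matrix (Fin 2) (Fin 2) ℂ, IsProjMeas P₀ P₁ ∧
      ∀ p ∈ Set.Icc (0:ℝ) 1,
        mutInfo p ((Q₁ * σ₁).trace.re) ((Q₀ * σ₀).trace.re) ≤
        mutInfo p ((P₁ * σ₁).trace.re) ((P₀ * σ₀).trace.re) := by
  have hH : Q₀.IsHermitian := hQ₀.1
  set V : Matrix (Fin 2) (Fin 2) ℂ := (hH.eigenvectorUnitary : Matrix (Fin 2) (Fin 2) ℂ)
    with hVdef
  set l : Fin 2 → ℝ := hH.eigenvalues with hldef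
  have hV1 : V * Vᴴ = 1 := by
    have := Matrix.mem_unitaryGroup_iff.mp hH.eigenvectorUnitary.2
    simpa [Matrix.star_eq_conjTranspose] using this
  have hV2 : Vᴴ * V = 1 := by
    have := Matrix.mem_unitaryGroup_iff'.mp hH.eigenvectorUnitary.2
    simpa [Matrix.star_eq_conjTranspose] using this
  have hV2' : ∀ X : Matrix (Fin 2) (Fin 2) ℂ, Vᴴ * (V * X) = X := fun X => by
    rw [← Matrix.mul_assoc, hV2, Matrix.one_mul]
  set D : Fin 2 → Matrix (Fin 2) (Fin 2) ℂ := fun i => Matrix.diagonal (Pi.single i 1)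
    with hDdef
  set E : Fin 2 → Matrix (Fin 2) (Fin 2) ℂ := fun i => V * D i * Vᴴ with hEdef
  have hDmul : ∀ i, D i * D i = D i := by
    intro i
    rw [hDdef]
    simp only [Matrix.diagonal_mul_diagonal]
    refine congrArg Matrix.diagonal ?_
    funext j
    by_cases h : j = i <;> simp [Pi.single_apply, h]
  have hDpsd : ∀ i, (D i).PosSemidef := by
    intro i
    refine Matrix.PosSemidef.diagonal fun j => ?_
    by_cases h : j = i <;> simp [Pi.single_apply, h]
  have hEpsd : ∀ i, (E i).PosSemidef := fun i => (hDpsd i).mul_mul_conjTranspose_same V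
  have hEidem : ∀ i, E i * E i = E i := by
    intro i
    rw [hEdef]
    simp only [Matrix.mul_assoc]
    rw [hV2' (D i * Vᴴ), ← Matrix.mul_assoc (D i), hDmul]
  have hspec : Q₀ = V * Matrix.diagonal (RCLike.ofReal ∘ l) * Vᴴ := by
    simpa [Matrix.star_eq_conjTranspose] using hH.spectral_theorem
  have hdiag : Matrix.diagonal (RCLike.ofReal ∘ l) =
      ((l 0 : ℂ)) • D 0 + ((l 1 : ℂ)) • D 1 := by
    rw [hDdef]
    ext i j
    fin_cases i <;> fin_cases j <;>
      simp [Matrix.diagonal, Pi.single_apply]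
  have hQ0dec : Q₀ = (l 0 : ℂ) • E 0 + (l 1 : ℂ) • E 1 := by
    rw [hspec, hdiag, hEdef]
    simp only [Matrix.mul_add, Matrix.add_mul, Matrix.mul_smul, Matrix.smul_mul]
  have hE01 : E 0 + E 1 = 1 := by
    rw [hEdef]
    simp only
    rw [← Matrix.add_mul, ← Matrix.mul_add]
    have : D 0 + D 1 = 1 := by
      rw [hDdef]
      ext i j
      fin_cases i <;> fin_cases j <;>
        simp [Matrix.diagonal, Matrix.one_apply, Pi.single_apply]
    rw [this, Matrix.mul_one, hV1]
  -- trace of E i with Q₀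
  have htrE : ∀ i, (E i).trace = 1 := by
    intro i
    rw [hEdef]
    simp only [Matrix.mul_assoc]
    rw [Matrix.trace_mul_comm, Matrix.mul_assoc, hV2, Matrix.mul_one, hDdef]
    simp [Matrix.trace_diagonal]
  have hEQ : ∀ i, (E i * Q₀).trace = (l i : ℂ) := by
    intro i
    have h1 : E i * Q₀ = V * (D i * (Matrix.diagonal (RCLike.ofReal ∘ l) * Vᴴ)) := by
      rw [hspec, hEdef]
      simp only [Matrix.mul_assoc]
      rw [hV2' (Matrix.diagonal (RCLike.ofReal ∘ l) * Vᴴ)]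
    rw [h1, Matrix.trace_mul_comm]
    simp only [Matrix.mul_assoc]
    rw [hV2, Matrix.mul_one, hDdef]
    simp only [Matrix.diagonal_mul_diagonal, Matrix.trace_diagonal]
    simp [Pi.single_apply]
  -- eigenvalue bounds
  have hl0 : ∀ i, 0 ≤ l i := fun i => hQ₀.eigenvalues_nonneg i
  have hQ₁eq : Q₁ = 1 - Q₀ := eq_sub_of_add_eq' hQ
  have hl1 : ∀ i, l i ≤ 1 := by
    intro i
    have h := trace_mul_re_nonneg (hEpsd i) hQ₁
    rw [hQ₁eq] at h
    have : E i * (1 - Q₀) = E i - E i * Q₀ := by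
      rw [Matrix.mul_sub, Matrix.mul_one]
    rw [this, Matrix.trace_sub, hEQ i, htrE i] at h
    simp only [Complex.sub_re, Complex.one_re, Complex.ofReal_re] at h
    linarith
  -- trace pairings with states
  have hretr : ∀ σ : Matrix (Fin 2) (Fin 2) ℂ,
      ((Q₀ * σ).trace).re = l 0 * ((E 0 * σ).trace).re + l 1 * ((E 1 * σ).trace).re := by
    intro σ
    rw [hQ0dec]
    simp only [Matrix.add_mul, Matrix.smul_mul, Matrix.trace_add, Matrix.trace_smul,
      smul_eq_mul, Complex.add_re, Complex.re_ofReal_mul]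
  have hsum : ∀ σ : Matrix (Fin 2) (Fin 2) ℂ, σ.trace = 1 →
      ((E 0 * σ).trace).re + ((E 1 * σ).trace).re = 1 := by
    intro σ hσ
    have h1 : E 0 * σ + E 1 * σ = σ := by rw [← Matrix.add_mul, hE01, Matrix.one_mul]
    have h2 := congrArg (fun M : Matrix (Fin 2) (Fin 2) ℂ => (M.trace).re) h1
    simpa [Matrix.trace_add, Complex.add_re, hσ] using h2
  have ht0 : ∀ i (σ : Matrix (Fin 2) (Fin 2) ℂ), σ.PosSemidef → 0 ≤ ((E i * σ).trace).re :=
    fun i σ hσ => trace_mul_re_nonneg (hEpsd i) hσ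
  -- wlog on which eigenvalue is larger
  rcases le_total (l 1) (l 0) with hord | hord
  · refine ⟨E 0, E 1, ⟨(hEpsd 0).1, (hEpsd 1).1, hEidem 0, hEidem 1, hE01⟩, ?_⟩
    intro p hp
    have ht := hsum σ₀ hσ₀t
    have hs := hsum σ₁ hσ₁t
    have e00 : ((Q₀ * σ₀).trace).re =
        l 0 * ((E 0 * σ₀).trace).re + l 1 * (1 - ((E 0 * σ₀).trace).re) := by
      rw [hretr σ₀]; rw [show ((E 1 * σ₀).trace).re = 1 - ((E 0 * σ₀).trace).re by linarith]
    have e11 : ((Q₁ * σ₁).trace).re =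
        1 - (l 0 * (1 - ((E 1 * σ₁).trace).re) + l 1 * ((E 1 * σ₁).trace).re) := by
      have h1 : Q₁ * σ₁ = σ₁ - Q₀ * σ₁ := by
        rw [hQ₁eq, Matrix.sub_mul, Matrix.one_mul]
      rw [h1, Matrix.trace_sub, Complex.sub_re, hσ₁t, hretr σ₁,
        show ((E 0 * σ₁).trace).re = 1 - ((E 1 * σ₁).trace).re by linarith]
      simp
    rw [e00, e11]
    exact mutInfo_eig_le hp.1 hp.2 (ht0 1 σ₁ hσ₁) (by linarith [ht0 0 σ₁ hσ₁])
      (ht0 0 σ₀ hσ₀) (by linarith [ht0 1 σ₀ hσ₀]) (hl0 1) hord (hl1 0)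
  · refine ⟨E 1, E 0, ⟨(hEpsd 1).1, (hEpsd 0).1, hEidem 1, hEidem 0,
      by rw [add_comm]; exact hE01⟩, ?_⟩
    intro p hp
    have ht := hsum σ₀ hσ₀t
    have hs := hsum σ₁ hσ₁t
    have e00 : ((Q₀ * σ₀).trace).re =
        l 1 * ((E 1 * σ₀).trace).re + l 0 * (1 - ((E 1 * σ₀).trace).re) := by
      rw [hretr σ₀, show ((E 0 * σ₀).trace).re = 1 - ((E 1 * σ₀).trace).re by linarith]
      ring
    have e11 : ((Q₁ * σ₁).trace).re =
        1 - (l 1 * (1 - ((E 0 * σ₁).trace).re) + l 0 * ((E 0 * σ₁).trace).re) := by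
      have h1 : Q₁ * σ₁ = σ₁ - Q₀ * σ₁ := by
        rw [hQ₁eq, Matrix.sub_mul, Matrix.one_mul]
      rw [h1, Matrix.trace_sub, Complex.sub_re, hσ₁t, hretr σ₁,
        show ((E 1 * σ₁).trace).re = 1 - ((E 0 * σ₁).trace).re by linarith]
      simp; ring
    rw [e00, e11]
    exact mutInfo_eig_le hp.1 hp.2 (ht0 0 σ₁ hσ₁) (by linarith [ht0 1 σ₁ hσ₁])
      (ht0 1 σ₀ hσ₀) (by linarith [ht0 0 σ₀ hσ₀]) (hl0 0) hord (hl1 1)
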